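/- (Necessity direction of the Cut rule.) Let P be a probability measure, and let A, B, C be measurable events with P(A ∩ B) > 0. Set x = P(C | A ∩ B) and y = P(B|A). Then x·y ≤ P(C|A) ≤ x·y + 1 - y. -/

import Mathlib

/-!
By the chain rule `x * y = P(C ∩ B | A)`. This is at most `P(C | A)`, and `P(C | A)` exceeds it
by `P(C ∩ A \ B) / P(A) ≤ P(A \ B) / P(A) = 1 - y`.
-/

open MeasureTheory

/-- Conditional probability `P(E|H) = P(E ∩ H) / P(H)` as a real number. -/
noncomputable def condProb {Ω : Type*} [MeasurableSpace Ω] (P : Measure Ω) (E H : Set Ω) : ℝ :=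
  (P (E ∩ H)).toReal / (P H).toReal

/-- Subtraction-free form of `μ (E ∩ H \ F) ≤ μ (H \ F)`. -/
lemma measure_inter_add_measure_inter_le {Ω : Type*} [MeasurableSpace Ω] (μ : Measure Ω)
    (E : Set Ω) {F : Set Ω} (hF : MeasurableSet F) (H : Set Ω) :
    μ (E ∩ H) + μ (F ∩ H) ≤ μ (E ∩ F ∩ H) + μ H := by
  have hsplit : μ (E ∩ H) ≤ μ (E ∩ F ∩ H) + μ (H \ F) := by
    refine (measure_mono fun x hx => ?_).trans (measure_union_le _ _)
    by_cases hxF : x ∈ F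
    · exact Or.inl ⟨⟨hx.1, hxF⟩, hx.2⟩
    · exact Or.inr ⟨hx.2, hxF⟩
  calc μ (E ∩ H) + μ (F ∩ H) ≤ μ (E ∩ F ∩ H) + μ (H \ F) + μ (H ∩ F) := by
        rw [Set.inter_comm F H]; gcongr
    _ = μ (E ∩ F ∩ H) + μ H := by
        rw [add_assoc, add_comm (μ (H \ F)), measure_inter_add_sdiff H hF]

section condProb

variable {Ω : Type*} [MeasurableSpace Ω] (P : Measure Ω) [IsFiniteMeasure P]

lemma condProb_mono_left {E E' : Set Ω} (h : E ⊆ E') (H : Set Ω) :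
    condProb P E H ≤ condProb P E' H := by
  unfold condProb
  gcongr
  exact measure_ne_top P _

lemma condProb_inter_mul_condProb (E F H : Set Ω) (hHF : P (H ∩ F) ≠ 0) :
    condProb P E (H ∩ F) * condProb P F H = condProb P (E ∩ F) H := by
  have hHF' : (P (H ∩ F)).toReal ≠ 0 := ENNReal.toReal_ne_zero.2 ⟨hHF, measure_ne_top P _⟩
  have hEFH : E ∩ (H ∩ F) = E ∩ F ∩ H := by rw [Set.inter_comm H F, ← Set.inter_assoc]
  unfold condProb
  rw [Set.inter_comm F H, hEFH, div_mul_div_cancel₀ hHF']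

lemma condProb_le_condProb_inter_add_one_sub (E : Set Ω) {F : Set Ω} (hF : MeasurableSet F)
    {H : Set Ω} (hH : P H ≠ 0) :
    condProb P E H ≤ condProb P (E ∩ F) H + 1 - condProb P F H := by
  have hH' : 0 < (P H).toReal := ENNReal.toReal_pos hH (measure_ne_top P _)
  have hreal : (P (E ∩ H)).toReal + (P (F ∩ H)).toReal ≤ (P (E ∩ F ∩ H)).toReal + (P H).toReal := by
    rw [← ENNReal.toReal_add (measure_ne_top P _) (measure_ne_top P _),
      ← ENNReal.toReal_add (measure_ne_top P _) (measure_ne_top P _)]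
    exact ENNReal.toReal_mono (by finiteness) (measure_inter_add_measure_inter_le P E hF H)
  unfold condProb
  rw [div_add_one hH'.ne', div_sub_div_same, div_le_div_iff_of_pos_right hH']
  linarith

end condProb

theorem cut_rule_necessity_general {Ω : Type*} [MeasurableSpace Ω] (P : Measure Ω)
    [IsProbabilityMeasure P] (A B C : Set Ω)
    (hB : MeasurableSet B)
    (hPAB : 0 < P (A ∩ B)) :
    condProb P C (A ∩ B) * condProb P B A ≤ condProb P C A ∧
      condProb P C A ≤ condProb P C (A ∩ B) * condProb P B A + 1 - condProb P B A := by
  have hPA : P A ≠ 0 := (hPAB.trans_le (measure_mono Set.inter_subset_left)).ne'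
  rw [condProb_inter_mul_condProb P C B A hPAB.ne']
  exact ⟨condProb_mono_left P Set.inter_subset_left A,
    condProb_le_condProb_inter_add_one_sub P C hB hPA⟩

/-- Necessity direction of the Cut rule. -/
theorem cut_rule_necessity {Ω : Type*} [MeasurableSpace Ω] (P : Measure Ω)
    [IsProbabilityMeasure P] (A B C : Set Ω)
    (hA : MeasurableSet A) (hB : MeasurableSet B) (hC : MeasurableSet C)
    (hPAB : 0 < P (A ∩ B)) :
    condProb P C (A ∩ B) * condProb P B A ≤ condProb P C A ∧
      condProb P C A ≤ condProb P C (A ∩ B) * condProb P B A + 1 - condProb P B A :=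
  cut_rule_necessity_general P A B C hB hPAB
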